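/- Let K ≥ 1 and for each k ∈ {1,…,K} let N_k be a finite nonempty set and q^k a nonnegative transient matrix indexed by N_k. Let S = N_1 × ⋯ × N_K and let π : S → {1,…,K} be any map. Define the matrix Q^π indexed by S by Q^π(s,t) = q^{π(s)}(s_{π(s)}, t_{π(s)}) if t_j = s_j for every j ≠ π(s), and Q^π(s,t) = 0 otherwise. Then Q^π is nonnegative and transient. -/
import Mathlib


open Matrix Filter

open scoped Classical


lemma pow_entry_nonneg {n : Type*} [Fintype n] [DecidableEq n]
    (q : Matrix n n ℝ) (hnn : ∀ i j, 0 ≤ q i j) :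
    ∀ (t : ℕ) (i j : n), 0 ≤ (q ^ t) i j := by
  intro t
  induction t with
  | zero => intro i j; simp [Matrix.one_apply]; split <;> norm_num
  | succ t ih =>
    intro i j
    rw [pow_succ, Matrix.mul_apply]
    exact Finset.sum_nonneg fun k _ => mul_nonneg (ih i k) (hnn k j)

lemma exists_lyapunov {n : Type*} [Fintype n] [DecidableEq n] [Nonempty n]
    (q : Matrix n n ℝ) (hnn : ∀ i j, 0 ≤ q i j)
    (htr : ∀ i j, Tendsto (fun t : ℕ => (q ^ t) i j) atTop (nhds 0)) :
    ∃ v : n → ℝ, (∀ i, 1 ≤ v i) ∧ ∀ i, (∑ j, q i j * v j) + 2⁻¹ ≤ v i := by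
  have hcpos : (0:ℝ) < (Fintype.card n : ℝ) := by
    have := Fintype.card_pos (α := n); positivity
  set ε : ℝ := (2 * (Fintype.card n : ℝ))⁻¹ with hε
  have hεpos : 0 < ε := by positivity
  have hev : ∀ᶠ t : ℕ in atTop, ∀ i j : n, (q ^ t) i j < ε := by
    rw [Filter.eventually_all]
    intro i
    rw [Filter.eventually_all]
    intro j
    exact (htr i j).eventually (eventually_lt_nhds hεpos)
  obtain ⟨T, hT⟩ := eventually_atTop.1 hev
  refine ⟨fun i => ∑ t ∈ Finset.range (T + 1), ∑ j, (q ^ t) i j, ?_, ?_⟩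
  · intro i
    have h0 : ∑ j, (q ^ 0) i j = 1 := by simp [Matrix.one_apply]
    calc (1:ℝ) = ∑ j, (q ^ 0) i j := h0.symm
      _ ≤ ∑ t ∈ Finset.range (T + 1), ∑ j, (q ^ t) i j := by
          apply Finset.single_le_sum (f := fun t => ∑ j, (q ^ t) i j)
          · intro t _
            exact Finset.sum_nonneg fun j _ => pow_entry_nonneg q hnn t i j
          · simp
  · intro i
    have hq : ∑ j, q i j * (∑ t ∈ Finset.range (T + 1), ∑ k, (q ^ t) j k)
        = ∑ t ∈ Finset.range (T + 1), ∑ k, (q ^ (t+1)) i k := by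
      simp_rw [Finset.mul_sum]
      rw [Finset.sum_comm]
      refine Finset.sum_congr rfl fun t _ => ?_
      rw [Finset.sum_comm]
      refine Finset.sum_congr rfl fun k _ => ?_
      rw [pow_succ', Matrix.mul_apply]
    rw [hq]
    have htel : ∑ t ∈ Finset.range (T + 1), ∑ k, (q ^ (t+1)) i k
        = (∑ t ∈ Finset.range (T + 1), ∑ k, (q ^ t) i k) - ∑ k, (q ^ 0) i k
          + ∑ k, (q ^ (T+1)) i k := by
      rw [Finset.sum_range_succ' (fun t => ∑ k, (q ^ t) i k) T, Finset.sum_range_succ]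
      ring
    rw [htel]
    have h0 : ∑ k, (q ^ 0) i k = 1 := by simp [Matrix.one_apply]
    have hlast : ∑ k, (q ^ (T+1)) i k ≤ 2⁻¹ := by
      have : ∑ k, (q ^ (T+1)) i k ≤ ∑ _k : n, ε :=
        Finset.sum_le_sum fun k _ => (hT (T+1) (by omega) i k).le
      rw [Finset.sum_const, nsmul_eq_mul] at this
      refine this.trans ?_
      rw [hε, Finset.card_univ]
      rw [mul_inv]
      rw [show ((Fintype.card n : ℝ)) * (2⁻¹ * ((Fintype.card n : ℝ))⁻¹)
          = ((Fintype.card n : ℝ) * ((Fintype.card n : ℝ))⁻¹) * 2⁻¹ by ring,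
        mul_inv_cancel₀ (ne_of_gt hcpos), one_mul]
    rw [h0]
    linarith

/-- if each bandit `k` has a nonnegative transient transition-rate matrix `q k`,
then for any stationary nonrandomized policy `π` the induced transition-rate matrix `Qπ` on
multi-states is nonnegative and transient. -/
theorem policy_matrix_nonneg_transient {K : ℕ} (hK : 1 ≤ K)
    (N : Fin K → Type*) [∀ k, Fintype (N k)] [∀ k, DecidableEq (N k)] [∀ k, Nonempty (N k)]
    (q : ∀ k, Matrix (N k) (N k) ℝ)
    (hnn : ∀ k i j, 0 ≤ q k i j)
    (htr : ∀ k i j, Tendsto (fun t : ℕ => ((q k) ^ t) i j) atTop (nhds 0))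
    (π : (∀ k, N k) → Fin K)
    (Qπ : Matrix (∀ k, N k) (∀ k, N k) ℝ)
    (hQπ : ∀ s t, Qπ s t =
      if (∀ j, j ≠ π s → t j = s j) then q (π s) (s (π s)) (t (π s)) else 0) :
    (∀ s t, 0 ≤ Qπ s t) ∧
      ∀ s t, Tendsto (fun m : ℕ => (Qπ ^ m) s t) atTop (nhds 0) := by
  have hv : ∀ k, ∃ v : N k → ℝ, (∀ i, 1 ≤ v i) ∧
      ∀ i, (∑ j, q k i j * v j) + 2⁻¹ ≤ v i :=
    fun k => exists_lyapunov (q k) (hnn k) (htr k)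
  choose v hv1 hv2 using hv
  obtain ⟨w, hwdef⟩ : ∃ w : (∀ k, N k) → ℝ, ∀ s, w s = ∏ k, v k (s k) :=
    ⟨_, fun _ => rfl⟩
  have hw1 : ∀ s, (1:ℝ) ≤ w s := by
    intro s; rw [hwdef]
    have := Finset.prod_le_prod (s := (Finset.univ : Finset (Fin K)))
      (f := fun _ : Fin K => (1:ℝ)) (g := fun k => v k (s k))
      (fun _ _ => zero_le_one) (fun k _ => hv1 k (s k))
    simpa using this
  have hw0 : ∀ s, (0:ℝ) ≤ w s := fun s => le_trans zero_le_one (hw1 s)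
  obtain ⟨M, hM1, hM2⟩ : ∃ M : ℝ, (1 ≤ M) ∧ ∀ s, w s ≤ M := by
    refine ⟨Finset.univ.sup' Finset.univ_nonempty w, ?_, ?_⟩
    · obtain ⟨s⟩ := (inferInstance : Nonempty (∀ k, N k))
      exact le_trans (hw1 s) (Finset.le_sup' w (Finset.mem_univ s))
    · exact fun s => Finset.le_sup' w (Finset.mem_univ s)
  have hMpos : (0:ℝ) < M := lt_of_lt_of_le one_pos hM1
  obtain ⟨ρ, hρ⟩ : ∃ ρ : ℝ, ρ = 1 - (2 * M)⁻¹ := ⟨_, rfl⟩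
  have hρ1 : ρ < 1 := by
    have : (0:ℝ) < (2*M)⁻¹ := by positivity
    rw [hρ]; linarith
  have hρ0 : 0 ≤ ρ := by
    have h2 : (2*M)⁻¹ ≤ 2⁻¹ := by
      apply inv_anti₀ (by norm_num)
      linarith
    rw [hρ]; linarith
  have hQnn : ∀ s t, 0 ≤ Qπ s t := by
    intro s t
    rw [hQπ]
    split
    · exact hnn _ _ _
    · exact le_refl 0
  refine ⟨hQnn, ?_⟩
  have key : ∀ s, ∑ t, Qπ s t * w t ≤ ρ * w s := by
    intro s
    obtain ⟨P, hPdef⟩ : ∃ P : ℝ,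
        P = ∏ k ∈ Finset.univ.erase (π s), v k (s k) := ⟨_, rfl⟩
    have hP1 : (1:ℝ) ≤ P := by
      rw [hPdef]
      have := Finset.prod_le_prod (s := Finset.univ.erase (π s))
        (f := fun _ : Fin K => (1:ℝ)) (g := fun k => v k (s k))
        (fun _ _ => zero_le_one) (fun k _ => hv1 k (s k))
      simpa using this
    have hP0 : (0:ℝ) ≤ P := le_trans zero_le_one hP1
    have hwP : w s = v (π s) (s (π s)) * P := by
      rw [hwdef, hPdef]
      exact (Finset.mul_prod_erase Finset.univ (fun k => v k (s k))
        (Finset.mem_univ (π s))).symm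
    have hsum : ∑ t, Qπ s t * w t
        = ∑ x : N (π s), q (π s) (s (π s)) x * (v (π s) x * P) := by
      have h1 : ∑ t, Qπ s t * w t
          = ∑ t ∈ Finset.univ.filter (fun t => ∀ j, j ≠ π s → t j = s j),
              q (π s) (s (π s)) (t (π s)) * w t := by
        rw [Finset.sum_filter]
        refine Finset.sum_congr rfl fun t _ => ?_
        rw [hQπ]
        split <;> simp
      have h2 : Finset.univ.filter (fun t => ∀ j, j ≠ π s → t j = s j)
          = Finset.univ.image (Function.update s (π s)) := by
        ext t
        simp only [Finset.mem_filter, Finset.mem_univ, true_and, Finset.mem_image]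
        constructor
        · intro h
          refine ⟨t (π s), ?_⟩
          funext j
          by_cases hj : j = π s
          · subst hj; simp
          · rw [Function.update_of_ne hj, h j hj]
        · rintro ⟨x, rfl⟩ j hj
          rw [Function.update_of_ne hj]
      rw [h1, h2, Finset.sum_image (fun x _ y _ h => Function.update_injective s (π s) h)]
      refine Finset.sum_congr rfl fun x _ => ?_
      rw [Function.update_self]
      congr 1
      rw [hwdef]
      have hup : ∀ k, v k (Function.update s (π s) x k)
          = Function.update (fun k => v k (s k)) (π s) (v (π s) x) k := by
        intro k
        by_cases hk : k = π s
        · subst hk; simp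
        · rw [Function.update_of_ne hk, Function.update_of_ne hk]
      rw [Finset.prod_congr rfl fun k _ => hup k]
      rw [Finset.prod_update_of_mem (Finset.mem_univ (π s))]
      rw [hPdef, Finset.sdiff_singleton_eq_erase]
    rw [hsum]
    have h3 : ∑ x : N (π s), q (π s) (s (π s)) x * (v (π s) x * P)
        = (∑ x, q (π s) (s (π s)) x * v (π s) x) * P := by
      rw [Finset.sum_mul]
      exact Finset.sum_congr rfl fun x _ => (mul_assoc _ _ _).symm
    rw [h3]
    have h4 : (∑ x, q (π s) (s (π s)) x * v (π s) x) * P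
        ≤ (v (π s) (s (π s)) - 2⁻¹) * P := by
      apply mul_le_mul_of_nonneg_right _ hP0
      have := hv2 (π s) (s (π s))
      linarith
    refine h4.trans ?_
    have h5 : (v (π s) (s (π s)) - 2⁻¹) * P = w s - 2⁻¹ * P := by rw [hwP]; ring
    rw [h5]
    have h6 : w s - 2⁻¹ * P ≤ w s - 2⁻¹ := by nlinarith
    refine h6.trans ?_
    have h7 : (2*M)⁻¹ * w s ≤ 2⁻¹ := by
      have h8 : (2*M)⁻¹ * w s ≤ (2*M)⁻¹ * M :=
        mul_le_mul_of_nonneg_left (hM2 s) (by positivity)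
      refine h8.trans ?_
      rw [mul_inv, mul_assoc, inv_mul_cancel₀ (ne_of_gt hMpos), mul_one]
    rw [hρ]; nlinarith [hw0 s]
  have hpow := pow_entry_nonneg Qπ hQnn
  have hb : ∀ m s, ∑ t, (Qπ ^ m) s t * w t ≤ ρ ^ m * w s := by
    intro m
    induction m with
    | zero =>
      intro s
      simp only [pow_zero, Matrix.one_apply, ite_mul, one_mul, zero_mul]
      rw [Finset.sum_ite_eq]
      simp
    | succ m ih =>
      intro s
      have h1 : ∑ t, (Qπ ^ (m+1)) s t * w t
          = ∑ u, Qπ s u * (∑ t, (Qπ ^ m) u t * w t) := by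
        simp_rw [Finset.mul_sum]
        rw [Finset.sum_comm]
        refine Finset.sum_congr rfl fun t _ => ?_
        rw [pow_succ', Matrix.mul_apply, Finset.sum_mul]
        exact Finset.sum_congr rfl fun u _ => (mul_assoc _ _ _)
      rw [h1]
      calc ∑ u, Qπ s u * (∑ t, (Qπ ^ m) u t * w t)
          ≤ ∑ u, Qπ s u * (ρ ^ m * w u) :=
            Finset.sum_le_sum fun u _ =>
              mul_le_mul_of_nonneg_left (ih u) (hQnn s u)
        _ = ρ ^ m * ∑ u, Qπ s u * w u := by
            rw [Finset.mul_sum]; exact Finset.sum_congr rfl fun u _ => by ring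
        _ ≤ ρ ^ m * (ρ * w s) :=
            mul_le_mul_of_nonneg_left (key s) (pow_nonneg hρ0 m)
        _ = ρ ^ (m+1) * w s := by ring
  intro s t
  have hub : ∀ m, (Qπ ^ m) s t ≤ ρ ^ m * w s := by
    intro m
    have h1 : (Qπ ^ m) s t ≤ (Qπ ^ m) s t * w t := by
      nlinarith [hw1 t, hpow m s t]
    refine h1.trans (le_trans ?_ (hb m s))
    exact Finset.single_le_sum
      (fun u _ => mul_nonneg (hpow m s u) (hw0 u)) (Finset.mem_univ t)
  have hlim : Tendsto (fun m : ℕ => ρ ^ m * w s) atTop (nhds 0) := by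
    have := tendsto_pow_atTop_nhds_zero_of_lt_one hρ0 hρ1
    simpa using this.mul_const (w s)
  exact squeeze_zero (fun m => hpow m s t) hub hlim
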